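/- arXiv:2601.03101 — 2 statements merged into one kernel-verified Lean document; each statement's English description precedes it below -/
import Mathlib

section
/- Let X and Y be quasi-categories and F : X ⟶ Y a map of simplicial sets satisfying: (i) the induced functor ho(F) : ho(X) ⥤ ho(Y) between homotopy categories is an isofibration and is full; (ii) the naturality square formed by F, N(ho(F)), and the unit maps X ⟶ N(ho(X)) and Y ⟶ N(ho(Y)) of the adjunction ho ⊣ N is a pullback square of simplicial sets (condition (ii) expresses that F is fully faithful). Then F is an inner fibration, i.e. F has the right lifting property with respect to every inner horn inclusion Λ[n, i] ⟶ Δ[n] with 0 < i < n; together with (i), F is a fibration of quasi-categories. -/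
/-!
The nerve of a functor is an inner fibration: inner horns in the nerve of the source fill because
nerves are quasi-categories, and the filler lies over the given simplex of the target because nerves
are strict Segal, so that an `n`-simplex is determined by its spine, which every inner horn
contains. Condition (ii) exhibits `F` as a base change of `N(ho(F))`, and inner fibrations are
stable under base change.
-/

universe u v

open CategoryTheory MorphismProperty Simplicial

namespace SSet

lemma spine_yonedaEquiv {X : SSet.{u}} {n : ℕ} (a : Δ[n] ⟶ X) :
    X.spine n (yonedaEquiv a) = (stdSimplex.spineId n).map a := by
  ext k
  · exact (NatTrans.naturality_apply a _ _).symm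
  · exact (NatTrans.naturality_apply a _ _).symm

lemma IsStrictSegal.hom_ext_of_horn {X : SSet.{u}} [X.IsStrictSegal] {n : ℕ} {i : Fin (n + 3)}
    (h₀ : 0 < i) (hₙ : i < Fin.last (n + 2)) {a b : Δ[n + 2] ⟶ X}
    (h : Λ[n + 2, i].ι ≫ a = Λ[n + 2, i].ι ≫ b) : a = b := by
  apply yonedaEquiv.injective
  apply (IsStrictSegal.segal _).injective
  rw [spine_yonedaEquiv, spine_yonedaEquiv, ← horn.spineId_map_hornInclusion i h₀ hₙ]
  exact congrArg (horn.spineId i h₀ hₙ).map h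

lemma innerFibration_of_isStrictSegal {X Y : SSet.{u}} [Quasicategory X] [Y.IsStrictSegal]
    (p : X ⟶ Y) : InnerFibration p := by
  refine ⟨fun _ _ _ ⟨i, h₀, hₙ⟩ ↦ ⟨fun {f g} sq ↦ ?_⟩⟩
  obtain ⟨σ, hσ⟩ := Quasicategory.hornFilling h₀ hₙ f
  have hfac : σ ≫ p = g :=
    IsStrictSegal.hom_ext_of_horn h₀ hₙ (by rw [reassoc_of% hσ.symm, sq.w])
  exact ⟨⟨⟨σ, hσ.symm, hfac⟩⟩⟩

instance innerFibration_nerveFunctor_map {C D : Cat.{v, u}} (G : C ⟶ D) :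
    InnerFibration (nerveFunctor.map G) :=
  have : Quasicategory (nerveFunctor.obj C) := inferInstanceAs (Quasicategory (nerve C))
  have : (nerveFunctor.obj D).IsStrictSegal := inferInstanceAs (nerve D).IsStrictSegal
  innerFibration_of_isStrictSegal _

end SSet

open SSet in
theorem innerFibration_of_isofibration_of_fullyFaithful_general
    (ho : SSet.{0} ⥤ Cat.{0, 0}) (adj : ho ⊣ nerveFunctor)
    (X Y : SSet.{0})
    (F : X ⟶ Y)
    (hpb : IsPullback (adj.unit.app X) F (nerveFunctor.map (ho.map F)) (adj.unit.app Y)) :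
    ∀ (n : ℕ) (i : Fin (n + 1)), 0 < (i : ℕ) → (i : ℕ) < n →
      HasLiftingProperty (SSet.horn n i).ι F := by
  intro n i h₀ hₙ
  have hF : innerFibrations F := innerFibrations.of_isPullback hpb (mem_innerFibrations _)
  exact hF _ (horn_ι_mem_innerHornInclusions (Fin.lt_def.mpr h₀) (Fin.lt_def.mpr hₙ))

/-- Let `X` and `Y` be quasi-categories and `F : X ⟶ Y` a map of simplicial sets such that
(i) the induced functor `ho(F)` between homotopy categories is a full isofibration, and
(ii) the naturality square formed by `F`, `N(ho(F))` and the units of the adjunction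
`ho ⊣ N` is a pullback of simplicial sets (i.e. `F` is fully faithful).
Then `F` is an inner fibration.  Here `ho` stands for any left adjoint of the nerve
functor `N : Cat ⥤ SSet`, i.e. a homotopy category functor. -/
theorem innerFibration_of_isofibration_of_fullyFaithful
    (ho : SSet.{0} ⥤ Cat.{0, 0}) (adj : ho ⊣ nerveFunctor)
    (X Y : SSet.{0}) (hX : SSet.Quasicategory X) (hY : SSet.Quasicategory Y)
    (F : X ⟶ Y)
    (hfull : (ho.map F).toFunctor.Full)
    (hisofib : ∀ (c : ho.obj X) (d : ho.obj Y) (e : (ho.map F).toFunctor.obj c ≅ d),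
      ∃ (c' : ho.obj X) (h : (ho.map F).toFunctor.obj c' = d) (eIso : c ≅ c'),
        (ho.map F).toFunctor.map eIso.hom ≫ eqToHom h = e.hom)
    (hpb : IsPullback (adj.unit.app X) F (nerveFunctor.map (ho.map F)) (adj.unit.app Y)) :
    ∀ (n : ℕ) (i : Fin (n + 1)), 0 < (i : ℕ) → (i : ℕ) < n →
      HasLiftingProperty (SSet.horn n i).ι F :=
  innerFibration_of_isofibration_of_fullyFaithful_general ho adj X Y F hpb
end

section
/- Let k be a field, let V and W be k-vector spaces, and let (Wₙ)ₙ∈ℕ be a decreasing sequence of subspaces of W. Then, inside V ⊗ W, the image of V ⊗ (⋂ₙ Wₙ) under the map induced by the inclusion ⋂ₙ Wₙ ⊆ W equals the intersection ⋂ₙ of the images of the maps V ⊗ Wₙ ⟶ V ⊗ W induced by the inclusions Wₙ ⊆ W; that is, tensoring with V commutes with countable intersections of subspaces. -/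
open TensorProduct

/-- Over a field, tensoring with a vector space `V` commutes with countable
intersections of subspaces: for a decreasing sequence `(Wₙ)` of subspaces of `W`,
the image of `V ⊗ (⋂ₙ Wₙ)` inside `V ⊗ W` equals the intersection of the images
of the `V ⊗ Wₙ`. -/
theorem tensor_commutes_with_countable_intersections
    (k : Type) [Field k]
    (V W : Type) [AddCommGroup V] [Module k V] [AddCommGroup W] [Module k W]
    (Wseq : ℕ → Submodule k W) (hdec : Antitone Wseq) :
    LinearMap.range (LinearMap.lTensor V (⨅ n, Wseq n).subtype) =
      ⨅ n, LinearMap.range (LinearMap.lTensor V (Wseq n).subtype) := by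
  classical
  apply le_antisymm
  · rw [le_iInf_iff]
    intro n
    rw [show (⨅ m, Wseq m).subtype
        = (Wseq n).subtype ∘ₗ Submodule.inclusion (iInf_le Wseq n) from rfl,
      LinearMap.lTensor_comp]
    exact LinearMap.range_comp_le_range _ _
  · intro x hx
    set b := Module.Basis.ofVectorSpace k V with hb
    set e : V ⊗[k] W ≃ₗ[k] (Module.Basis.ofVectorSpaceIndex k V) →₀ W :=
      (TensorProduct.congr b.repr (LinearEquiv.refl k W)).trans
        (TensorProduct.finsuppScalarLeft k W _) with he
    have key : ∀ (U : Submodule k W) (y : V ⊗[k] U) (i),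
        e (LinearMap.lTensor V U.subtype y) i ∈ U := by
      intro U y i
      induction y using TensorProduct.induction_on with
      | zero => simp
      | tmul v w =>
        have : e (v ⊗ₜ[k] (w : W)) i = (b.repr v i) • (w : W) := by
          simp [he]
        simpa [this] using U.smul_mem (b.repr v i) w.2
      | add y z hy hz =>
        rw [map_add, map_add, Finsupp.add_apply]
        exact U.add_mem hy hz
    simp only [Submodule.mem_iInf, LinearMap.mem_range] at hx
    have hmem : ∀ i, e x i ∈ ⨅ n, Wseq n := by
      intro i
      rw [Submodule.mem_iInf]
      intro n
      obtain ⟨y, hy⟩ := hx n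
      rw [← hy]
      exact key _ y i
    refine ⟨∑ i ∈ (e x).support, b i ⊗ₜ[k]
      (⟨e x i, hmem i⟩ : ↥(⨅ n, Wseq n)), ?_⟩
    rw [map_sum]
    simp only [LinearMap.lTensor_tmul, Submodule.coe_subtype]
    apply e.injective
    rw [map_sum]
    have hsingle : ∀ i (w : W), e (b i ⊗ₜ[k] w) = Finsupp.single i w := by
      intro i w
      simp [he, Module.Basis.repr_self, TensorProduct.finsuppScalarLeft_apply_tmul]
    simp only [hsingle]
    exact Finsupp.sum_single (e x)
end
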